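/- For the block language L over Σ_I = {0,1,#} and Σ_O = {0,1,*}: Player I wins the delay game Γ_f(L) for every bounded delay function f. -/

import Mathlib

/-- `listPrefix u i` is the concatenation `u 0 ++ u 1 ++ ⋯ ++ u (i-1)`. -/
def listPrefix {A : Type*} (u : ℕ → List A) : ℕ → List A
  | 0 => []
  | n + 1 => listPrefix u n ++ u n

/-- The infinite word obtained by concatenating the blocks `u 0, u 1, u 2, …`
(well-defined on position `n` as soon as some finite concatenation has length `> n`). -/
noncomputable def flattenInf {A : Type*} [Nonempty A] (u : ℕ → List A) (n : ℕ) : A :=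
  letI := Classical.dec (∃ k, n < (listPrefix u k).length)
  if h : ∃ k, n < (listPrefix u k).length then
    (listPrefix u h.choose).getD n (Classical.arbitrary A)
  else Classical.arbitrary A

/-- A delay function maps each round to a positive number of letters. -/
def IsDelay (f : ℕ → ℕ) : Prop := ∀ i, 1 ≤ f i

/-- A delay function is bounded if `f i = 1` for almost all `i`. -/
def BoundedDelay (f : ℕ → ℕ) : Prop := ∃ N, ∀ i, N ≤ i → f i = 1

/-- A delay function is constant if `f i = 1` for all `i > 0`. -/
def ConstantDelay (f : ℕ → ℕ) : Prop := ∀ i, 0 < i → f i = 1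

/-- Player O wins the delay game `Γ_f(L)`: she has a strategy `τO` (mapping the
concatenation `u 0 ⋯ u i` of Player I's moves so far to her next letter) such that
every play consistent with it has its outcome in `L`. -/
def OWinsDelay {I O : Type*} [Nonempty I] (f : ℕ → ℕ) (L : Set (ℕ → I × O)) : Prop :=
  ∃ τO : List I → O,
    ∀ (u : ℕ → List I) (v : ℕ → O),
      (∀ i, (u i).length = f i) →
      (∀ i, v i = τO (listPrefix u (i + 1))) →
      (fun n => (flattenInf u n, v n)) ∈ L

/-- Player I wins the delay game `Γ_f(L)`: he has a strategy `τI` (mapping Player O's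
moves so far to his next word, of length prescribed by `f`) such that the outcome of
every play consistent with it is not in `L`. -/
def IWinsDelay {I O : Type*} [Nonempty I] (f : ℕ → ℕ) (L : Set (ℕ → I × O)) : Prop :=
  ∃ τI : List O → List I,
    (∀ w, (τI w).length = f w.length) ∧
    ∀ (u : ℕ → List I) (v : ℕ → O),
      (∀ i, u i = τI (List.ofFn fun j : Fin i => v j)) →
      (fun n => (flattenInf u n, v n)) ∉ L

/-- The input alphabet `{0, 1, #}`. -/
inductive InL where
  | zero | one | hash
deriving DecidableEq

instance : Fintype InL := ⟨{.zero, .one, .hash}, fun x => by cases x <;> simp⟩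

/-- The output alphabet `{0, 1, *}`. -/
inductive OutL where
  | zero | one | star
deriving DecidableEq

instance : Fintype OutL := ⟨{.zero, .one, .star}, fun x => by cases x <;> simp⟩

instance : Nonempty InL := ⟨.hash⟩
instance : Nonempty OutL := ⟨.star⟩

/-- The letter `0` or `1` of the input alphabet corresponding to a bit. -/
def bitIn : Bool → InL := fun b => if b then .one else .zero

/-- The letter `0` or `1` of the output alphabet corresponding to a bit. -/
def bitOut : Bool → OutL := fun b => if b then .one else .zero

/-- An input letter is a bit, i.e. `0` or `1`. -/
def IsBit (a : InL) : Prop := a = .zero ∨ a = .one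

/-- `α` has an input block (a word `#w` with `w ∈ {0,1}⁺`) of length `n` starting at
position `i`. -/
def InputBlockAt (α : ℕ → InL) (i n : ℕ) : Prop :=
  2 ≤ n ∧ α i = .hash ∧ ∀ j, 1 ≤ j → j < n → IsBit (α (i + j))

/-- `γ` has an output block `(#,a_n)(a_1,*)(a_2,*)⋯(a_{n-1},*)(a_n,a_n)` of length `n+1`
starting at position `i` (here the block length is `n`, so `2 ≤ n`). -/
def OutputBlockAt (γ : ℕ → InL × OutL) (i n : ℕ) : Prop :=
  2 ≤ n ∧ ∃ b : Bool,
    (γ i).1 = .hash ∧ (γ i).2 = bitOut b ∧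
    (∀ j, 1 ≤ j → j < n - 1 → IsBit (γ (i + j)).1 ∧ (γ (i + j)).2 = .star) ∧
    γ (i + (n - 1)) = (bitIn b, bitOut b)

/-- The block language `L`: if the first component contains infinitely many `#` and
arbitrarily long input blocks, then the word contains arbitrarily long output blocks. -/
def BlockLang : Set (ℕ → InL × OutL) :=
  { γ | ((∀ N, ∃ i, N ≤ i ∧ (γ i).1 = .hash) ∧
          (∀ n, ∃ i m, n ≤ m ∧ InputBlockAt (fun k => (γ k).1) i m)) →
        ∀ n, ∃ i m, n ≤ m ∧ OutputBlockAt γ i m }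


section BlockAux

lemma listPrefix_length' {A : Type*} (u : ℕ → List A) (n : ℕ) :
    (listPrefix u n).length = ∑ t ∈ Finset.range n, (u t).length := by
  induction n with
  | zero => simp [listPrefix]
  | succ n ih => simp [listPrefix, ih, Finset.sum_range_succ]

lemma listPrefix_prefix' {A : Type*} (u : ℕ → List A) {k k' : ℕ} (h : k ≤ k') :
    listPrefix u k <+: listPrefix u k' := by
  induction k' with
  | zero =>
    have : k = 0 := Nat.le_zero.mp h
    simp [this]
  | succ n ih =>
    rcases Nat.lt_or_ge k (n + 1) with h1 | h2
    · exact (ih (Nat.lt_succ_iff.mp h1)).trans ⟨u n, rfl⟩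
    · have : k = n + 1 := le_antisymm h h2
      simp [this]

lemma flattenInf_eq' {A : Type*} [Nonempty A] (u : ℕ → List A) {k p : ℕ}
    (h : p < (listPrefix u k).length) :
    flattenInf u p = (listPrefix u k).getD p (Classical.arbitrary A) := by
  have hex : ∃ k, p < (listPrefix u k).length := ⟨k, h⟩
  unfold flattenInf
  rw [dif_pos hex]
  have h2 : p < (listPrefix u hex.choose).length := hex.choose_spec
  rw [List.getD_eq_getElem _ _ h2, List.getD_eq_getElem _ _ h]
  rcases le_total k hex.choose with hle | hle
  · exact ((listPrefix_prefix' u hle).getElem h).symm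
  · exact (listPrefix_prefix' u hle).getElem h2

/-- the bit Player I plays to spoil Player O's committed bit. -/
def negLet : OutL → InL
  | .zero => .one
  | _ => .zero

lemma isBit_negLet (o : OutL) : IsBit (negLet o) := by
  cases o
  · exact Or.inr rfl
  · exact Or.inl rfl
  · exact Or.inl rfl

/-- the letter Player I plays at absolute position `p`, given Player O's past moves
`v` (as a function; only values `v i` with `i + D < p` are actually used). -/
def inLetter (M D : ℕ) (v : ℕ → OutL) (p : ℕ) : InL :=
  if p < M then .zero
  else if p - M = 2 ^ Nat.log 2 (p - M + 1) - 1 then .hash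
  else if 2 ^ Nat.log 2 (p - M + 1) + D ≤ p - M then
    negLet (v (M + (2 ^ Nat.log 2 (p - M + 1) - 1)))
  else .zero

lemma inLetter_congr (M D p : ℕ) {v v' : ℕ → OutL}
    (h : ∀ i, i + D < p → v i = v' i) :
    inLetter M D v p = inLetter M D v' p := by
  unfold inLetter
  split
  · rfl
  split
  · rfl
  split
  · rename_i hp hne hle
    have h1 : 1 ≤ 2 ^ Nat.log 2 (p - M + 1) := Nat.one_le_two_pow
    rw [h (M + (2 ^ Nat.log 2 (p - M + 1) - 1)) (by omega)]
  · rfl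

lemma inLetter_lt (M D p : ℕ) (v : ℕ → OutL) (h : p < M) :
    inLetter M D v p = .zero := by
  unfold inLetter; rw [if_pos h]

lemma inLetter_hash (M D k : ℕ) (v : ℕ → OutL) :
    inLetter M D v (M + (2 ^ k - 1)) = .hash := by
  have h1 : 1 ≤ 2 ^ k := Nat.one_le_two_pow
  unfold inLetter
  rw [if_neg (by omega)]
  have h2 : M + (2 ^ k - 1) - M = 2 ^ k - 1 := by omega
  rw [h2]
  have h3 : 2 ^ k - 1 + 1 = 2 ^ k := by omega
  rw [h3, Nat.log_pow one_lt_two, if_pos rfl]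

lemma inLetter_bit (M D k j : ℕ) (v : ℕ → OutL) (hj1 : 1 ≤ j) (hj2 : j < 2 ^ k) :
    inLetter M D v (M + (2 ^ k - 1) + j)
      = if 2 ^ k + D ≤ 2 ^ k - 1 + j then negLet (v (M + (2 ^ k - 1))) else .zero := by
  have h1 : 1 ≤ 2 ^ k := Nat.one_le_two_pow
  unfold inLetter
  have hq : M + (2 ^ k - 1) + j - M = 2 ^ k - 1 + j := by omega
  rw [if_neg (by omega), hq]
  have hlog : Nat.log 2 (2 ^ k - 1 + j + 1) = k := by
    apply Nat.log_eq_of_pow_le_of_lt_pow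
    · omega
    · have : 2 ^ (k + 1) = 2 ^ k + 2 ^ k := by ring
      omega
  rw [hlog, if_neg (by omega)]

lemma inLetter_hash_inv (M D : ℕ) (v : ℕ → OutL) (p : ℕ)
    (h : inLetter M D v p = .hash) :
    M ≤ p ∧ p = M + (2 ^ Nat.log 2 (p - M + 1) - 1) := by
  unfold inLetter at h
  by_cases h1 : p < M
  · rw [if_pos h1] at h; exact absurd h (by decide)
  rw [if_neg h1] at h
  by_cases h2 : p - M = 2 ^ Nat.log 2 (p - M + 1) - 1
  · exact ⟨le_of_not_gt h1, by omega⟩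
  rw [if_neg h2] at h
  split at h
  · exfalso
    rcases isBit_negLet (v (M + (2 ^ Nat.log 2 (p - M + 1) - 1))) with hb | hb <;>
      rw [h] at hb <;> exact InL.noConfusion hb
  · exact absurd h (by decide)

end BlockAux

/-- Player I wins the delay game with the block language as winning condition for
every bounded delay function. -/
theorem i_wins_blockLang_bounded (f : ℕ → ℕ) (hf : IsDelay f) (hb : BoundedDelay f) :
    IWinsDelay f BlockLang := by
  classical
  obtain ⟨N, hN⟩ := hb
  set S : ℕ → ℕ := fun j => ∑ t ∈ Finset.range j, f t with hSdef
  have hNS : N ≤ S N := by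
    calc N = ∑ _t ∈ Finset.range N, 1 := by simp
    _ ≤ S N := Finset.sum_le_sum fun t _ => hf t
  set D : ℕ := S N - N with hD
  set M : ℕ := N + D with hM
  have hSN : S N = M := by omega
  have hSj : ∀ j, N ≤ j → S j = j + D := by
    intro j hj
    induction j, hj using Nat.le_induction with
    | base => omega
    | succ n hn ih =>
      have h1 : S (n + 1) = S n + f n := by simp [hSdef, Finset.sum_range_succ]
      have h2 := hN n hn
      omega
  set τ : List OutL → List InL := fun w =>
    if w.length < N then List.replicate (f w.length) InL.zero
    else [inLetter M D (fun i => w.getD i OutL.star) (w.length + D)] with hτ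
  refine ⟨τ, ?_, ?_⟩
  · intro w
    simp only [hτ]
    by_cases hw : w.length < N
    · rw [if_pos hw]; simp
    · rw [if_neg hw]
      simp [hN w.length (by omega)]
  · intro u v hu hmem
    -- lengths of Player I's moves
    have hlen : ∀ i, (u i).length = f i := by
      intro i
      rw [hu i]
      simp only [hτ, List.length_ofFn]
      by_cases hi : i < N
      · rw [if_pos hi]; simp
      · rw [if_neg hi]
        simp [hN i (by omega)]
    have hLP : ∀ n, (listPrefix u n).length = S n := by
      intro n
      rw [listPrefix_length']
      exact Finset.sum_congr rfl fun t _ => hlen t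
    have hofFn : ∀ (j i : ℕ), i < j →
        (List.ofFn fun t : Fin j => v t).getD i OutL.star = v i := by
      intro j i hij
      rw [List.getD_eq_getElem _ _ (by simpa using hij)]
      simp
    -- the flattened input word is given by `inLetter`
    have hα : ∀ p, flattenInf u p = inLetter M D v p := by
      intro p
      by_cases hp : p < M
      · have hplen : p < (listPrefix u N).length := by rw [hLP, hSN]; omega
        rw [flattenInf_eq' u hplen, List.getD_eq_getElem _ _ hplen,
          inLetter_lt M D p v hp]
        have hz : ∀ n, n ≤ N → ∀ x ∈ listPrefix u n, x = InL.zero := by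
          intro n
          induction n with
          | zero => intro _ x hx; simp [listPrefix] at hx
          | succ n ih =>
            intro hn x hx
            simp only [listPrefix, List.mem_append] at hx
            rcases hx with hx | hx
            · exact ih (by omega) x hx
            · rw [hu n] at hx
              simp only [hτ, List.length_ofFn] at hx
              rw [if_pos (by omega)] at hx
              exact List.eq_of_mem_replicate hx
        exact hz N le_rfl _ (List.getElem_mem _)
      · push_neg at hp
        set j := p - D with hj
        have hjN : N ≤ j := by omega
        have hpj : p = j + D := by omega
        have hl1 : (listPrefix u j).length = p := by rw [hLP, hSj j hjN]; omega
        have hl2 : p < (listPrefix u (j + 1)).length := by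
          rw [hLP, hSj (j + 1) (by omega)]; omega
        rw [flattenInf_eq' u hl2, List.getD_eq_getElem _ _ hl2]
        have heq : listPrefix u (j + 1) = listPrefix u j ++ u j := rfl
        have hl2' : p < (listPrefix u j ++ u j).length := by rw [← heq]; exact hl2
        rw [List.getElem_of_eq heq hl2, List.getElem_append_right (by omega)]
        have hidx : p - (listPrefix u j).length = 0 := by omega
        have huj : u j = [inLetter M D v p] := by
          rw [hu j]
          simp only [hτ, List.length_ofFn]
          rw [if_neg (by omega)]
          congr 1
          rw [show j + D = p from hpj.symm]
          apply inLetter_congr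
          intro i hi
          exact hofFn j i (by omega)
        simp only [hidx, huj]
        rfl
    -- unpack membership in the block language
    simp only [BlockLang, Set.mem_setOf_eq] at hmem
    have hpremise : (∀ N', ∃ i, N' ≤ i ∧ (flattenInf u i, v i).1 = InL.hash) ∧
        ∀ n, ∃ i m, n ≤ m ∧ InputBlockAt (fun k => ((flattenInf u k, v k) : InL × OutL).1) i m := by
      constructor
      · intro N'
        refine ⟨M + (2 ^ N' - 1), ?_, ?_⟩
        · have := Nat.lt_two_pow_self (n := N'); omega
        · show flattenInf u _ = _
          rw [hα]; exact inLetter_hash M D N' v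
      · intro n
        refine ⟨M + (2 ^ (max n 1) - 1), 2 ^ (max n 1), ?_, ?_, ?_, ?_⟩
        · have := Nat.lt_two_pow_self (n := max n 1)
          have := le_max_left n 1
          omega
        · have h1 : (2:ℕ) ^ 1 ≤ 2 ^ (max n 1) :=
            Nat.pow_le_pow_right (by norm_num) (le_max_right n 1)
          omega
        · show flattenInf u _ = _
          rw [hα]; exact inLetter_hash M D (max n 1) v
        · intro j hj1 hj2
          show IsBit (flattenInf u _)
          rw [hα, inLetter_bit M D (max n 1) j v hj1 hj2]
          split
          · exact isBit_negLet _
          · exact Or.inl rfl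
    obtain ⟨i, m, hnm, hob⟩ := hmem hpremise (D + 2)
    obtain ⟨h2m, b, hh, hvi, hmid, hend⟩ := hob
    simp only at hh hvi hmid hend
    rw [hα] at hh
    obtain ⟨hMi, hieq⟩ := inLetter_hash_inv M D v i hh
    set k := Nat.log 2 (i - M + 1) with hk
    have hEk : 1 ≤ 2 ^ k := Nat.one_le_two_pow
    set p := i + (m - 1) with hp
    have hαp : flattenInf u p = bitIn b := congrArg Prod.fst hend
    have hvp : v p = bitOut b := congrArg Prod.snd hend
    rw [hα] at hαp
    set k' := Nat.log 2 (p - M + 1) with hk'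
    have hEk' : 1 ≤ 2 ^ k' := Nat.one_le_two_pow
    have hkk' : k ≤ k' := by
      apply Nat.log_mono_right
      omega
    have hbitne : ∀ o : OutL, negLet (bitOut b) ≠ bitIn b := by
      intro _; cases b <;> decide
    rcases eq_or_lt_of_le hkk' with hke | hkl
    · -- endpoint in the same block: Player I spoiled the bit
      have hmlt : m - 1 < 2 ^ k := by
        by_contra hcon
        push_neg at hcon
        have h1 : (2:ℕ) ^ (k + 1) ≤ p - M + 1 := by
          have : (2:ℕ) ^ (k + 1) = 2 ^ k + 2 ^ k := by ring
          omega
        have h2 : k + 1 ≤ k' := by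
          calc k + 1 = Nat.log 2 (2 ^ (k + 1)) := (Nat.log_pow one_lt_two _).symm
          _ ≤ k' := Nat.log_mono_right h1
        omega
      have hpform : p = M + (2 ^ k - 1) + (m - 1) := by omega
      rw [hpform, inLetter_bit M D k (m - 1) v (by omega) hmlt,
        if_pos (by omega), ← hieq, hvi] at hαp
      exact hbitne .star hαp
    · -- a later `#` lies in between, or at the endpoint
      set i' := M + (2 ^ k' - 1) with hi'
      have hple : 2 ^ k' ≤ p - M + 1 := by
        rw [hk']
        exact Nat.pow_log_le_self 2 (by omega)
      have h2k : 2 ^ (k + 1) ≤ 2 ^ k' := Nat.pow_le_pow_right (by norm_num) hkl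
      have h2k2 : (2:ℕ) ^ (k + 1) = 2 ^ k + 2 ^ k := by ring
      have hii' : i < i' := by omega
      have hi'p : i' ≤ p := by omega
      have hhash' : inLetter M D v i' = .hash := inLetter_hash M D k' v
      rcases eq_or_lt_of_le hi'p with he | hl
      · rw [← he, hhash'] at hαp
        cases b <;> exact InL.noConfusion hαp
      · have hmem' := hmid (i' - i) (by omega) (by omega)
        have : IsBit (flattenInf u (i + (i' - i))) := hmem'.1
        rw [show i + (i' - i) = i' by omega, hα, hhash'] at this
        rcases this with hb | hb <;> exact InL.noConfusion hb
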